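/- arXiv:2410.08648 — 5 statements merged into one kernel-verified Lean document; each statement's English description precedes it below -/
import Mathlib

section
/- Let N ≥ 1, λ, μ > 0, β ∈ (0, λ), T ≥ 0 and C̃ > 0. Let ψ_T : ℝ^N → ℝ be bounded and continuous, and let w : [T,∞) → C^b(ℝ^N) be continuous with ∥w(s)∥_∞ ≤ C̃ e^{−β(s−T)} for all s ≥ T. Define ψ(t)(x) = (e^{(t−T)(Δ−λI)}ψ_T)(x) + μ ∫_T^t (e^{(s−T)(Δ−λI)} w(t−s+T))(x) ds for t > T. Then ∥ψ(t)∥_∞ ≤ e^{−β(t−T)} ( ∥ψ_T∥_∞ + μ C̃/(λ−β) ) for all t > T. -/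
open MeasureTheory
open scoped BoundedContinuousFunction

noncomputable section

/-- The damped heat semigroup `e^{t(Δ-ρI)}` applied to `w`. -/
def dampedHeat (N : ℕ) (ρ t : ℝ) (w : EuclideanSpace ℝ (Fin N) → ℝ)
    (x : EuclideanSpace ℝ (Fin N)) : ℝ :=
  ∫ y : EuclideanSpace ℝ (Fin N),
    (4 * Real.pi * t) ^ (-(N : ℝ) / 2) * Real.exp (-‖x - y‖ ^ 2 / (4 * t) - ρ * t) * w y

/-!
The kernel of `e^{t(Δ-ρI)}` is a Gaussian of total mass `e^{-ρt}`, so in sup norm the semigroup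
shrinks by the factor `e^{-ρt}`. At time `s` the Duhamel integrand is therefore bounded by
`C̃ e^{-λ(s-T)} e^{-β(t-s)} = C̃ e^{-β(t-T)} e^{-(λ-β)(s-T)}`, whose integral over `(T, t]` is at most
`C̃ e^{-β(t-T)} / (λ-β)`; the initial term is bounded using `e^{-λ(t-T)} ≤ e^{-β(t-T)}`.
-/

open Real Set

section HeatKernel

variable {E : Type*} [NormedAddCommGroup E] [InnerProductSpace ℝ E] [FiniteDimensional ℝ E]
  [MeasurableSpace E] [BorelSpace E]

theorem integral_dampedHeatKernel {t : ℝ} (ht : 0 < t) (ρ : ℝ) (x : E) :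
    ∫ y : E, (4 * π * t) ^ (-(Module.finrank ℝ E : ℝ) / 2) *
      exp (-‖x - y‖ ^ 2 / (4 * t) - ρ * t) = exp (-ρ * t) := by
  have hb : 0 < 1 / (4 * t) := by positivity
  have hsplit : ∀ y : E, exp (-‖x - y‖ ^ 2 / (4 * t) - ρ * t) =
      exp (-ρ * t) * exp (-(1 / (4 * t)) * ‖x - y‖ ^ 2) := fun y => by
    rw [← exp_add]; ring_nf
  simp_rw [hsplit, ← mul_assoc]
  rw [integral_const_mul, integral_sub_left_eq_self (fun y => exp (-(1 / (4 * t)) * ‖y‖ ^ 2)),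
    GaussianFourier.integral_rexp_neg_mul_sq_norm hb,
    show π / (1 / (4 * t)) = 4 * π * t by field_simp,
    mul_right_comm, ← rpow_add (by positivity), neg_div, neg_add_cancel, rpow_zero, one_mul]

end HeatKernel

theorem abs_dampedHeat_le {N : ℕ} {ρ t : ℝ} (ht : 0 < t) {g : EuclideanSpace ℝ (Fin N) → ℝ}
    {M : ℝ} (hg : ∀ y, |g y| ≤ M) (x : EuclideanSpace ℝ (Fin N)) :
    |dampedHeat N ρ t g x| ≤ exp (-ρ * t) * M := by
  set K : EuclideanSpace ℝ (Fin N) → ℝ := fun y =>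
    (4 * π * t) ^ (-(N : ℝ) / 2) * exp (-‖x - y‖ ^ 2 / (4 * t) - ρ * t)
  have hK_int : ∫ y, K y = exp (-ρ * t) := by
    simpa using integral_dampedHeatKernel (E := EuclideanSpace ℝ (Fin N)) ht ρ x
  have hK : Integrable K := Integrable.of_integral_ne_zero (by rw [hK_int]; positivity)
  calc |dampedHeat N ρ t g x| ≤ ∫ y, K y * M := by
        rw [← Real.norm_eq_abs]
        refine norm_integral_le_of_norm_le (hK.mul_const M) (.of_forall fun y => ?_)
        rw [norm_mul, Real.norm_of_nonneg (by positivity)]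
        exact mul_le_mul_of_nonneg_left (hg y) (by positivity)
    _ = exp (-ρ * t) * M := by rw [integral_mul_const, hK_int]

theorem integral_Ioc_exp_neg_mul_sub {c : ℝ} (hc : c ≠ 0) {T t : ℝ} (h : T ≤ t) :
    ∫ s in Ioc T t, exp (-c * (s - T)) = (1 - exp (-c * (t - T))) / c := by
  rw [← intervalIntegral.integral_of_le h,
    intervalIntegral.integral_comp_sub_right (fun s : ℝ => exp (-c * s)),
    intervalIntegral.integral_comp_mul_left (fun s : ℝ => exp s) (neg_ne_zero.2 hc),
    integral_exp, sub_self, mul_zero, exp_zero, smul_eq_mul]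
  field_simp
  ring

theorem abs_integral_dampedHeat_duhamel_le {N : ℕ} {lam β C T t : ℝ} (hβ : β < lam)
    (hTt : T ≤ t) {w : ℝ → (EuclideanSpace ℝ (Fin N) →ᵇ ℝ)}
    (hw : ∀ s, T ≤ s → ‖w s‖ ≤ C * exp (-β * (s - T))) (x : EuclideanSpace ℝ (Fin N)) :
    |∫ s in Ioc T t, dampedHeat N lam (s - T) (w (t - s + T)) x| ≤
      C * exp (-β * (t - T)) / (lam - β) := by
  have hC : 0 ≤ C := by simpa using (norm_nonneg _).trans (hw T le_rfl)
  have hc : 0 < lam - β := sub_pos.2 hβ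
  have hpt : ∀ s ∈ Ioc T t, ‖dampedHeat N lam (s - T) (w (t - s + T)) x‖ ≤
      C * exp (-β * (t - T)) * exp (-(lam - β) * (s - T)) := fun s hs => calc
    _ ≤ exp (-lam * (s - T)) * ‖w (t - s + T)‖ :=
      abs_dampedHeat_le (sub_pos.2 hs.1) (fun y => by simpa using (w _).norm_coe_le_norm y) x
    _ ≤ exp (-lam * (s - T)) * (C * exp (-β * (t - s + T - T))) := by
      gcongr; exact hw _ (by linarith [hs.2])
    _ = C * exp (-β * (t - T)) * exp (-(lam - β) * (s - T)) := by
      rw [mul_left_comm, mul_assoc, ← exp_add, ← exp_add]; ring_nf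
  calc |∫ s in Ioc T t, dampedHeat N lam (s - T) (w (t - s + T)) x|
      ≤ ∫ s in Ioc T t, C * exp (-β * (t - T)) * exp (-(lam - β) * (s - T)) :=
        norm_integral_le_of_norm_le (Continuous.integrableOn_Ioc (by fun_prop))
          (ae_restrict_of_forall_mem measurableSet_Ioc hpt)
    _ = C * exp (-β * (t - T)) * ((1 - exp (-(lam - β) * (t - T))) / (lam - β)) := by
        rw [integral_const_mul, integral_Ioc_exp_neg_mul_sub hc.ne' hTt]
    _ ≤ C * exp (-β * (t - T)) * (1 / (lam - β)) := by
        gcongr; linarith [exp_pos (-(lam - β) * (t - T))]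
    _ = C * exp (-β * (t - T)) / (lam - β) := mul_one_div _ _

theorem stmt_12_general (N : ℕ) (lam μ β : ℝ) (hμ : 0 < μ)
    (hβ : β < lam) (T : ℝ) (Ctil : ℝ)
    (ψT : EuclideanSpace ℝ (Fin N) → ℝ)
    (hψTb : ∃ M : ℝ, ∀ x, |ψT x| ≤ M)
    (w : ℝ → (EuclideanSpace ℝ (Fin N) →ᵇ ℝ))
    (hwb : ∀ s : ℝ, T ≤ s → ‖w s‖ ≤ Ctil * Real.exp (-β * (s - T)))
    (ψ : ℝ → EuclideanSpace ℝ (Fin N) → ℝ)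
    (hψ : ∀ (t : ℝ) (x : EuclideanSpace ℝ (Fin N)),
      ψ t x = dampedHeat N lam (t - T) ψT x +
        μ * ∫ s in Set.Ioc T t, dampedHeat N lam (s - T) (⇑(w (t - s + T))) x) :
    ∀ t : ℝ, T < t →
      (⨆ x, |ψ t x|) ≤
        Real.exp (-β * (t - T)) * ((⨆ x, |ψT x|) + μ * Ctil / (lam - β)) := by
  intro t ht
  obtain ⟨M, hM⟩ := hψTb
  have hbdd : BddAbove (range fun x => |ψT x|) := ⟨M, by rintro _ ⟨x, rfl⟩; exact hM x⟩
  have hsup_nonneg : 0 ≤ ⨆ x, |ψT x| := Real.iSup_nonneg fun x => abs_nonneg _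
  have hdecay : exp (-lam * (t - T)) ≤ exp (-β * (t - T)) :=
    exp_le_exp.2 (by nlinarith)
  refine ciSup_le fun x => ?_
  rw [hψ t x]
  calc _ ≤ |dampedHeat N lam (t - T) ψT x| +
        μ * |∫ s in Ioc T t, dampedHeat N lam (s - T) (w (t - s + T)) x| :=
        (abs_add_le _ _).trans_eq (by rw [abs_mul, abs_of_pos hμ])
    _ ≤ exp (-lam * (t - T)) * (⨆ x, |ψT x|) + μ * (Ctil * exp (-β * (t - T)) / (lam - β)) := by
        gcongr
        · exact abs_dampedHeat_le (sub_pos.2 ht) (le_ciSup hbdd) x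
        · exact abs_integral_dampedHeat_duhamel_le hβ ht.le hwb x
    _ ≤ exp (-β * (t - T)) * (⨆ x, |ψT x|) + μ * (Ctil * exp (-β * (t - T)) / (lam - β)) := by
        gcongr
    _ = _ := by ring

theorem stmt_12 (N : ℕ) (hN : 1 ≤ N) (lam μ β : ℝ) (hlam : 0 < lam) (hμ : 0 < μ)
    (hβ0 : 0 < β) (hβ : β < lam) (T : ℝ) (hT : 0 ≤ T) (Ctil : ℝ) (hCtil : 0 < Ctil)
    (ψT : EuclideanSpace ℝ (Fin N) → ℝ) (hψTc : Continuous ψT)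
    (hψTb : ∃ M : ℝ, ∀ x, |ψT x| ≤ M)
    (w : ℝ → (EuclideanSpace ℝ (Fin N) →ᵇ ℝ))
    (hw : ContinuousOn w (Set.Ici T))
    (hwb : ∀ s : ℝ, T ≤ s → ‖w s‖ ≤ Ctil * Real.exp (-β * (s - T)))
    (ψ : ℝ → EuclideanSpace ℝ (Fin N) → ℝ)
    (hψ : ∀ (t : ℝ) (x : EuclideanSpace ℝ (Fin N)),
      ψ t x = dampedHeat N lam (t - T) ψT x +
        μ * ∫ s in Set.Ioc T t, dampedHeat N lam (s - T) (⇑(w (t - s + T))) x) :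
    ∀ t : ℝ, T < t →
      (⨆ x, |ψ t x|) ≤
        Real.exp (-β * (t - T)) * ((⨆ x, |ψT x|) + μ * Ctil / (lam - β)) :=
  stmt_12_general N lam μ β hμ hβ T Ctil ψT hψTb w hwb ψ hψ
end
end

section
/- Let N ≥ 1, λ, μ > 0, β ∈ (0, λ), T ≥ 0 and C̃ > 0. Let ψ_T : ℝ^N → ℝ be bounded and continuously differentiable with bounded gradient, and let w : [T,∞) → C^b(ℝ^N) be continuous with ∥w(s)∥_∞ ≤ C̃ e^{−β(s−T)} for all s ≥ T. Define ψ(t)(x) = (e^{(t−T)(Δ−λI)}ψ_T)(x) + μ ∫_T^t (e^{(s−T)(Δ−λI)} w(t−s+T))(x) ds for t > T, let C_N be a constant such that ∥∇(e^{s(Δ−λI)}w)∥_∞ ≤ C_N s^{−1/2} e^{−λs}∥w∥_∞ for all s > 0 and all bounded continuous w, and set C₃ = ∫₀^∞ s^{−1/2} e^{−(λ−β)s} ds. Then ∥∇ψ(t)∥_∞ ≤ e^{−β(t−T)} ( ∥∇ψ_T∥_∞ + μ C̃ C_N C₃ ) for all t > T. -/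
/-!
Both terms of the Duhamel formula are differentiated under the integral sign. In the free term the
gradient falls on `ψ_T`, because the heat kernel is translation invariant with total mass one, so
its gradient is at most `e^{-λ(t-T)} ‖∇ψ_T‖_∞ ≤ e^{-β(t-T)} ‖∇ψ_T‖_∞`. In the Duhamel term the
gradient falls on the Gaussian kernel, whose derivative is dominated by a Gaussian; the smoothing
estimate and the decay of `w` bound the integrand by
`C_N C̃ e^{-β(t-T)} (s-T)^{-1/2} e^{-(λ-β)(s-T)}`, and the integral of this over `(T, t]` is at
most `C_N C̃ e^{-β(t-T)} C₃`.
-/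

open MeasureTheory
open scoped BoundedContinuousFunction

noncomputable section

open Real Set

lemma mul_exp_neg_mul_sq_le {c : ℝ} (hc : 0 < c) (r : ℝ) :
    r * exp (-c * r ^ 2) ≤ (√c)⁻¹ * exp (-(c / 2) * r ^ 2) := by
  have hsqrt : √c * r ≤ exp (c / 2 * r ^ 2) := by
    have h := add_one_le_exp (c / 2 * r ^ 2)
    have : (√c * r) ^ 2 = c * r ^ 2 := by rw [mul_pow, sq_sqrt hc.le]
    nlinarith [sq_nonneg (√c * r - 1)]
  calc r * exp (-c * r ^ 2)
      = (√c)⁻¹ * (√c * r) * (exp (-(c / 2) * r ^ 2) * exp (-(c / 2) * r ^ 2)) := by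
        rw [← exp_add, ← mul_assoc (√c)⁻¹, inv_mul_cancel₀ (sqrt_pos.2 hc).ne', one_mul]
        ring_nf
    _ ≤ (√c)⁻¹ * exp (c / 2 * r ^ 2) * (exp (-(c / 2) * r ^ 2) * exp (-(c / 2) * r ^ 2)) := by
        gcongr
    _ = (√c)⁻¹ * exp (-(c / 2) * r ^ 2) := by
        rw [mul_assoc, ← mul_assoc (exp _), ← exp_add, neg_mul, add_neg_cancel, exp_zero,
          one_mul]

lemma exp_neg_mul_sq_norm_sub_le {V : Type*} [SeminormedAddCommGroup V] {a : ℝ} (ha : 0 ≤ a)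
    {x x₀ : V} (hx : dist x x₀ ≤ 1) (y : V) :
    exp (-a * ‖x - y‖ ^ 2) ≤ exp a * exp (-(a / 2) * ‖x₀ - y‖ ^ 2) := by
  rw [← exp_add, exp_le_exp]
  have htri : ‖x₀ - y‖ ≤ ‖x - y‖ + 1 := by
    calc ‖x₀ - y‖ ≤ ‖x₀ - x‖ + ‖x - y‖ := norm_sub_le_norm_sub_add_norm_sub _ _ _
      _ ≤ 1 + ‖x - y‖ := by gcongr; rwa [← dist_eq_norm, dist_comm]
      _ = _ := add_comm _ _
  have hsq : ‖x₀ - y‖ ^ 2 ≤ 2 * ‖x - y‖ ^ 2 + 2 := by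
    nlinarith [norm_nonneg (x₀ - y), sq_nonneg (‖x - y‖ - 1)]
  nlinarith

section HeatKernel

variable {V : Type*} [NormedAddCommGroup V] [InnerProductSpace ℝ V] {t : ℝ}

def heatKernel (t : ℝ) (z : V) : ℝ :=
  (4 * π * t) ^ (-(Module.finrank ℝ V : ℝ) / 2) * exp (-(4 * t)⁻¹ * ‖z‖ ^ 2)

def heatKernelFDeriv (t : ℝ) (z : V) : V →L[ℝ] ℝ :=
  (-(2 * t)⁻¹ * heatKernel t z) • innerSL ℝ z

lemma heatKernel_pos (ht : 0 < t) (z : V) : 0 < heatKernel t z := by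
  unfold heatKernel; positivity

lemma continuous_heatKernel (t : ℝ) : Continuous (heatKernel (V := V) t) := by
  unfold heatKernel; fun_prop

lemma continuousOn_heatKernel_uncurry :
    ContinuousOn (fun p : ℝ × V => heatKernel p.1 p.2) (Ioi 0 ×ˢ univ) := by
  have hne : ∀ p ∈ Ioi (0 : ℝ) ×ˢ (univ : Set V), 4 * p.1 ≠ 0 := fun p hp =>
    mul_ne_zero four_ne_zero (ne_of_gt hp.1)
  unfold heatKernel
  refine ContinuousOn.mul ?_ ?_
  · refine ContinuousOn.rpow_const (by fun_prop) fun p hp => Or.inl ?_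
    have : 0 < p.1 := hp.1
    positivity
  · exact ((((continuous_const.mul continuous_fst).continuousOn.inv₀ hne).neg).mul
      (by fun_prop)).rexp

lemma continuous_heatKernelFDeriv (t : ℝ) : Continuous (heatKernelFDeriv (V := V) t) := by
  unfold heatKernelFDeriv
  have := continuous_heatKernel (V := V) t
  fun_prop

lemma continuousOn_heatKernelFDeriv_uncurry :
    ContinuousOn (fun p : ℝ × V => heatKernelFDeriv p.1 p.2) (Ioi 0 ×ˢ univ) := by
  unfold heatKernelFDeriv
  refine ContinuousOn.smul (ContinuousOn.mul ?_ continuousOn_heatKernel_uncurry) (by fun_prop)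
  exact ((continuous_const.mul continuous_fst).continuousOn.inv₀ fun p hp =>
    mul_ne_zero two_ne_zero (ne_of_gt hp.1)).neg

lemma hasFDerivAt_heatKernel (t : ℝ) (z : V) :
    HasFDerivAt (heatKernel t) (heatKernelFDeriv t z) z := by
  refine ((((hasFDerivAt_id z).norm_sq.const_mul (-(4 * t)⁻¹)).exp).const_mul
    ((4 * π * t) ^ (-(Module.finrank ℝ V : ℝ) / 2))).congr_fderiv ?_
  ext v
  simp only [heatKernelFDeriv, heatKernel, smul_apply,
    ContinuousLinearMap.comp_id, coe_innerSL_apply, id_eq, smul_eq_mul, nsmul_eq_mul]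
  ring

lemma exists_norm_heatKernelFDeriv_le (ht : 0 < t) :
    ∃ C, ∀ z : V, ‖heatKernelFDeriv t z‖ ≤ C * exp (-(8 * t)⁻¹ * ‖z‖ ^ 2) := by
  set A := (4 * π * t) ^ (-(Module.finrank ℝ V : ℝ) / 2)
  refine ⟨(2 * t)⁻¹ * A * (√(4 * t)⁻¹)⁻¹, fun z => ?_⟩
  have h8 : (4 * t)⁻¹ / 2 = (8 * t)⁻¹ := by field_simp; ring
  have hz := mul_exp_neg_mul_sq_le (c := (4 * t)⁻¹) (by positivity) ‖z‖
  rw [h8] at hz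
  calc ‖heatKernelFDeriv t z‖ = (2 * t)⁻¹ * A * (‖z‖ * exp (-(4 * t)⁻¹ * ‖z‖ ^ 2)) := by
        rw [heatKernelFDeriv, norm_smul, innerSL_apply_norm, norm_mul, norm_neg, norm_inv,
          Real.norm_of_nonneg (by positivity : (0 : ℝ) ≤ 2 * t),
          Real.norm_of_nonneg (heatKernel_pos ht z).le, heatKernel]
        ring
    _ ≤ (2 * t)⁻¹ * A * ((√(4 * t)⁻¹)⁻¹ * exp (-(8 * t)⁻¹ * ‖z‖ ^ 2)) := by gcongr
    _ = _ := by ring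

variable [FiniteDimensional ℝ V] [MeasurableSpace V] [BorelSpace V]

lemma integrable_exp_neg_mul_sq_norm {b : ℝ} (hb : 0 < b) :
    Integrable fun z : V => exp (-b * ‖z‖ ^ 2) :=
  .of_integral_ne_zero <| by rw [GaussianFourier.integral_rexp_neg_mul_sq_norm hb]; positivity

lemma integrable_heatKernel (ht : 0 < t) : Integrable (heatKernel (V := V) t) :=
  (integrable_exp_neg_mul_sq_norm (by positivity)).const_mul _

lemma integral_heatKernel (ht : 0 < t) : ∫ z, heatKernel (V := V) t z = 1 := by
  have h4t : π / (4 * t)⁻¹ = 4 * π * t := by field_simp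
  simp only [heatKernel]
  rw [integral_const_mul, GaussianFourier.integral_rexp_neg_mul_sq_norm (by positivity), h4t,
    ← rpow_add (by positivity), neg_div, neg_add_cancel, rpow_zero]

lemma hasFDerivAt_integral_heatKernel_mul (ht : 0 < t) {g : V → ℝ}
    (hg : AEStronglyMeasurable g) {M : ℝ} (hgM : ∀ y, ‖g y‖ ≤ M) (x₀ : V) :
    HasFDerivAt (fun x => ∫ y, heatKernel t (x - y) * g y)
      (∫ y, g y • heatKernelFDeriv t (x₀ - y)) x₀ := by
  obtain ⟨C, hC⟩ := exists_norm_heatKernelFDeriv_le (V := V) ht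
  have hM : 0 ≤ M := (norm_nonneg _).trans (hgM 0)
  have hK : ∀ x : V, Continuous fun y => heatKernel t (x - y) :=
    fun x => (continuous_heatKernel t).comp (continuous_sub_left x)
  -- for `x` within distance 1 of `x₀`, `‖∂K(x - y)‖` is dominated by a Gaussian centred at `x₀`
  refine hasFDerivAt_integral_of_dominated_of_fderiv_le (Metric.closedBall_mem_nhds x₀ one_pos)
    (F' := fun x y => g y • heatKernelFDeriv t (x - y))
    (bound := fun y => M * (C * (exp (8 * t)⁻¹ * exp (-((8 * t)⁻¹ / 2) * ‖x₀ - y‖ ^ 2))))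
    (.of_forall fun x => (hK x).aestronglyMeasurable.mul hg)
    (((integrable_heatKernel ht).comp_sub_left x₀).mul_bdd hg (.of_forall hgM))
    (hg.smul ((continuous_heatKernelFDeriv t).comp (continuous_sub_left x₀)).aestronglyMeasurable)
    (.of_forall fun y x hx => ?_)
    ((((integrable_exp_neg_mul_sq_norm (by positivity)).comp_sub_left x₀).const_mul _).const_mul
      _ |>.const_mul _) (.of_forall fun y x _ => ?_)
  · rw [norm_smul]
    have hC0 : 0 ≤ C := nonneg_of_mul_nonneg_left ((norm_nonneg _).trans (hC 0)) (exp_pos _)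
    exact mul_le_mul (hgM y) ((hC _).trans (mul_le_mul_of_nonneg_left
      (exp_neg_mul_sq_norm_sub_le (by positivity) hx y) hC0)) (norm_nonneg _) hM
  · exact ((hasFDerivAt_heatKernel t (x - y)).comp x
      ((hasFDerivAt_id x).sub_const y)).mul_const (g y) |>.congr_fderiv (by ext; simp)

lemma norm_integral_heatKernel_sub_smul_le {E : Type*} [NormedAddCommGroup E] [NormedSpace ℝ E]
    (ht : 0 < t) {F : V → E} {M : ℝ} (hFM : ∀ y, ‖F y‖ ≤ M) (x : V) :
    ‖∫ y, heatKernel t (x - y) • F y‖ ≤ M := by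
  calc ‖∫ y, heatKernel t (x - y) • F y‖ ≤ ∫ y, heatKernel t (x - y) * M :=
        norm_integral_le_of_norm_le (((integrable_heatKernel ht).comp_sub_left x).mul_const M)
          (.of_forall fun y => by
            rw [norm_smul, Real.norm_of_nonneg (heatKernel_pos ht _).le]
            exact mul_le_mul_of_nonneg_left (hFM y) (heatKernel_pos ht _).le)
    _ = M := by rw [integral_mul_const, integral_sub_left_eq_self, integral_heatKernel ht, one_mul]

lemma hasFDerivAt_integral_heatKernel_sub_mul_of_differentiable (ht : 0 < t) {f : V → ℝ}
    (hf : Differentiable ℝ f) {M M' : ℝ} (hfM : ∀ y, ‖f y‖ ≤ M) (hf'M : ∀ y, ‖fderiv ℝ f y‖ ≤ M')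
    (x₀ : V) :
    HasFDerivAt (fun x => ∫ y, heatKernel t (x - y) * f y)
      (∫ y, heatKernel t (x₀ - y) • fderiv ℝ f y) x₀ := by
  -- after substituting `y = x - z` the derivative falls on `f` instead of on the kernel
  have hconv : ∀ x, ∫ y, heatKernel t (x - y) * f y = ∫ z, heatKernel t z * f (x - z) := fun x => by
    rw [← integral_sub_left_eq_self _ volume x]; simp only [sub_sub_cancel]
  simp_rw [hconv, ← integral_sub_left_eq_self (fun y => heatKernel t (x₀ - y) • fderiv ℝ f y)
    volume x₀, sub_sub_cancel]
  have hK := integrable_heatKernel (V := V) ht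
  refine hasFDerivAt_integral_of_dominated_of_fderiv_le (Filter.univ_mem)
    (F' := fun x z => heatKernel t z • fderiv ℝ f (x - z)) (bound := fun z => heatKernel t z * M')
    (.of_forall fun x => hK.aestronglyMeasurable.mul
      (hf.continuous.comp (continuous_sub_left x)).aestronglyMeasurable)
    (hK.mul_bdd (hf.continuous.comp (continuous_sub_left x₀)).aestronglyMeasurable
      (.of_forall fun z => hfM _))
    (hK.aestronglyMeasurable.smul
      ((measurable_fderiv ℝ f).comp (measurable_const.sub measurable_id)).aestronglyMeasurable)
    (.of_forall fun z x _ => ?_) (hK.mul_const M') (.of_forall fun z x _ => ?_)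
  · rw [norm_smul, Real.norm_of_nonneg (heatKernel_pos ht _).le]
    exact mul_le_mul_of_nonneg_left (hf'M _) (heatKernel_pos ht _).le
  · exact ((hf (x - z)).hasFDerivAt.comp x ((hasFDerivAt_id x).sub_const z)).const_mul _
      |>.congr_fderiv (by ext; simp)

lemma integrable_heatKernelFDeriv (ht : 0 < t) : Integrable (heatKernelFDeriv (V := V) t) := by
  obtain ⟨C, hC⟩ := exists_norm_heatKernelFDeriv_le (V := V) ht
  exact ((integrable_exp_neg_mul_sq_norm (by positivity)).const_mul C).mono'
    (continuous_heatKernelFDeriv t).aestronglyMeasurable (.of_forall hC)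

lemma norm_integral_smul_heatKernelFDeriv_sub_le (ht : 0 < t) {g : V → ℝ} {M : ℝ}
    (hgM : ∀ y, ‖g y‖ ≤ M) (x : V) :
    ‖∫ y, g y • heatKernelFDeriv t (x - y)‖ ≤ M * ∫ z, ‖heatKernelFDeriv (V := V) t z‖ := by
  calc ‖∫ y, g y • heatKernelFDeriv t (x - y)‖ ≤ ∫ y, M * ‖heatKernelFDeriv t (x - y)‖ :=
        norm_integral_le_of_norm_le
          (((integrable_heatKernelFDeriv ht).norm.comp_sub_left x).const_mul M)
          (.of_forall fun y => by
            rw [norm_smul]; exact mul_le_mul_of_nonneg_right (hgM y) (norm_nonneg _))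
    _ = M * ∫ z, ‖heatKernelFDeriv t z‖ := by
        rw [integral_const_mul, integral_sub_left_eq_self (fun z => ‖heatKernelFDeriv t z‖)]

lemma aestronglyMeasurable_setIntegral_of_continuousOn {E : Type*} [NormedAddCommGroup E]
    [NormedSpace ℝ E] {s : Set ℝ} (hs : MeasurableSet s) {F : ℝ × V → E}
    (hF : ContinuousOn F (s ×ˢ univ)) :
    AEStronglyMeasurable (fun r => ∫ y, F (r, y)) (volume.restrict s) := by
  have hprod : (volume.restrict s).prod (volume : Measure V) =
      (volume.prod volume).restrict (s ×ˢ univ) := by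
    rw [← Measure.prod_restrict, Measure.restrict_univ]
  refine AEStronglyMeasurable.integral_prod_right' ?_
  rw [hprod]
  exact hF.aestronglyMeasurable (hs.prod .univ)

end HeatKernel

lemma norm_gradient {F : Type*} [NormedAddCommGroup F] [InnerProductSpace ℝ F] [CompleteSpace F]
    (f : F → ℝ) (x : F) : ‖gradient f x‖ = ‖fderiv ℝ f x‖ :=
  (InnerProductSpace.toDual ℝ F).symm.norm_map _

lemma integrableOn_rpow_neg_half_mul_exp_neg {c : ℝ} (hc : 0 < c) :
    IntegrableOn (fun u : ℝ => u ^ (-(1 : ℝ) / 2) * exp (-c * u)) (Ioi 0) := by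
  have h := integral_rpow_mul_exp_neg_mul_Ioi (a := 1 / 2) one_half_pos hc
  norm_num only [neg_mul] at h ⊢
  exact .of_integral_ne_zero (by rw [h]; positivity)

lemma integrableOn_Ioc_comp_sub {f : ℝ → ℝ} (hf : IntegrableOn f (Ioi 0)) (a b : ℝ) :
    IntegrableOn (fun s => f (s - a)) (Ioc a b) := by
  have h := ((measurePreserving_sub_right volume a).integrableOn_comp_preimage
    (measurableEmbedding_subRight a)).2 (hf.mono_set (Ioc_subset_Ioi_self : Ioc 0 (b - a) ⊆ Ioi 0))
  rwa [preimage_sub_const_Ioc, zero_add, sub_add_cancel] at h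

lemma setIntegral_Ioc_comp_sub_le {f : ℝ → ℝ} (hf : IntegrableOn f (Ioi 0))
    (hf0 : ∀ u ∈ Ioi (0 : ℝ), 0 ≤ f u) (a b : ℝ) :
    ∫ s in Ioc a b, f (s - a) ≤ ∫ u in Ioi 0, f u := by
  have h := (measurePreserving_sub_right volume a).setIntegral_preimage_emb
    (measurableEmbedding_subRight a) f (Ioc 0 (b - a))
  rw [preimage_sub_const_Ioc, zero_add, sub_add_cancel] at h
  rw [h]
  exact setIntegral_mono_set hf (ae_restrict_of_forall_mem measurableSet_Ioi hf0)
    Ioc_subset_Ioi_self.eventuallyLE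

lemma norm_setIntegral_Ioc_le_of_le_comp_sub {E : Type*} [NormedAddCommGroup E] [NormedSpace ℝ E]
    {f : ℝ → ℝ} (hf : IntegrableOn f (Ioi 0)) (hf0 : ∀ u ∈ Ioi (0 : ℝ), 0 ≤ f u) {a b K : ℝ}
    (hK : 0 ≤ K) {F : ℝ → E} (hF : ∀ s ∈ Ioc a b, ‖F s‖ ≤ K * f (s - a)) :
    ‖∫ s in Ioc a b, F s‖ ≤ K * ∫ u in Ioi 0, f u :=
  calc ‖∫ s in Ioc a b, F s‖ ≤ ∫ s in Ioc a b, K * f (s - a) :=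
        norm_integral_le_of_norm_le ((integrableOn_Ioc_comp_sub hf a b).const_mul K)
          (ae_restrict_of_forall_mem measurableSet_Ioc hF)
    _ ≤ K * ∫ u in Ioi 0, f u := by
        rw [integral_const_mul]
        exact mul_le_mul_of_nonneg_left (setIntegral_Ioc_comp_sub_le hf hf0 a b) hK

section DampedHeat

variable {N : ℕ} {ρ σ : ℝ}

lemma dampedHeat_eq (N : ℕ) (ρ σ : ℝ) (g : EuclideanSpace ℝ (Fin N) → ℝ)
    (x : EuclideanSpace ℝ (Fin N)) :
    dampedHeat N ρ σ g x = exp (-ρ * σ) * ∫ y, heatKernel σ (x - y) * g y := by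
  rw [dampedHeat, ← integral_const_mul]
  congr 1 with y
  have hdiv : -‖x - y‖ ^ 2 / (4 * σ) = -(4 * σ)⁻¹ * ‖x - y‖ ^ 2 := by ring
  rw [heatKernel, finrank_euclideanSpace_fin, sub_eq_add_neg, exp_add, hdiv, ← neg_mul]
  ring

lemma dampedHeat_const (hσ : 0 < σ) (c : ℝ) :
    dampedHeat N ρ σ (fun _ => c) = fun _ => exp (-ρ * σ) * c := by
  ext x
  rw [dampedHeat_eq, integral_mul_const, integral_sub_left_eq_self, integral_heatKernel hσ, one_mul]

def dampedHeatFDeriv (N : ℕ) (ρ σ : ℝ) (g : EuclideanSpace ℝ (Fin N) → ℝ)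
    (x : EuclideanSpace ℝ (Fin N)) : EuclideanSpace ℝ (Fin N) →L[ℝ] ℝ :=
  exp (-ρ * σ) • ∫ y, g y • heatKernelFDeriv σ (x - y)

lemma norm_dampedHeat_le (hσ : 0 < σ) {g : EuclideanSpace ℝ (Fin N) → ℝ} {M : ℝ}
    (hgM : ∀ y, ‖g y‖ ≤ M) (x : EuclideanSpace ℝ (Fin N)) :
    ‖dampedHeat N ρ σ g x‖ ≤ exp (-ρ * σ) * M := by
  simp_rw [dampedHeat_eq, norm_mul, Real.norm_of_nonneg (exp_pos _).le,
    ← smul_eq_mul (a := heatKernel σ _)]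
  exact mul_le_mul_of_nonneg_left (norm_integral_heatKernel_sub_smul_le hσ hgM x) (exp_pos _).le

lemma hasFDerivAt_dampedHeat (hσ : 0 < σ) {g : EuclideanSpace ℝ (Fin N) → ℝ}
    (hg : AEStronglyMeasurable g) {M : ℝ} (hgM : ∀ y, ‖g y‖ ≤ M) (x : EuclideanSpace ℝ (Fin N)) :
    HasFDerivAt (dampedHeat N ρ σ g) (dampedHeatFDeriv N ρ σ g x) x := by
  rw [funext (dampedHeat_eq N ρ σ g)]
  exact (hasFDerivAt_integral_heatKernel_mul hσ hg hgM x).const_mul _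

lemma bddAbove_range_norm_dampedHeatFDeriv (hσ : 0 < σ) {g : EuclideanSpace ℝ (Fin N) → ℝ}
    {M : ℝ} (hgM : ∀ y, ‖g y‖ ≤ M) :
    BddAbove (range fun x => ‖dampedHeatFDeriv N ρ σ g x‖) := by
  refine ⟨exp (-ρ * σ) * (M * ∫ z, ‖heatKernelFDeriv (V := EuclideanSpace ℝ (Fin N)) σ z‖),
    forall_mem_range.2 fun x => ?_⟩
  rw [dampedHeatFDeriv, norm_smul, Real.norm_of_nonneg (exp_pos _).le]
  exact mul_le_mul_of_nonneg_left (norm_integral_smul_heatKernelFDeriv_sub_le hσ hgM x)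
    (exp_pos _).le

lemma norm_dampedHeatFDeriv_le_of_iSup_le (hσ : 0 < σ) (g : EuclideanSpace ℝ (Fin N) →ᵇ ℝ)
    {c : ℝ} (h : (⨆ x, ‖gradient (dampedHeat N ρ σ g) x‖) ≤ c * ⨆ x, |g x|)
    (x : EuclideanSpace ℝ (Fin N)) : ‖dampedHeatFDeriv N ρ σ g x‖ ≤ c * ‖g‖ := by
  have hgrad : ∀ x, ‖gradient (dampedHeat N ρ σ g) x‖ = ‖dampedHeatFDeriv N ρ σ g x‖ := fun x => by
    rw [norm_gradient, (hasFDerivAt_dampedHeat hσ g.continuous.aestronglyMeasurable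
      g.norm_coe_le_norm x).fderiv]
  simp_rw [hgrad, ← Real.norm_eq_abs, ← BoundedContinuousFunction.norm_eq_iSup_norm] at h
  -- boundedness matters here: an unbounded `⨆` over `ℝ` is `0`
  exact (le_ciSup (bddAbove_range_norm_dampedHeatFDeriv hσ g.norm_coe_le_norm) x).trans h

lemma hasFDerivAt_dampedHeat_of_differentiable (hσ : 0 < σ) {f : EuclideanSpace ℝ (Fin N) → ℝ}
    (hf : Differentiable ℝ f) {M : ℝ} (hfM : ∀ y, ‖f y‖ ≤ M) {M' : ℝ}
    (hf'M : ∀ y, ‖fderiv ℝ f y‖ ≤ M') (x : EuclideanSpace ℝ (Fin N)) :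
    HasFDerivAt (dampedHeat N ρ σ f)
      (exp (-ρ * σ) • ∫ y, heatKernel σ (x - y) • fderiv ℝ f y) x := by
  rw [funext (dampedHeat_eq N ρ σ f)]
  exact (hasFDerivAt_integral_heatKernel_sub_mul_of_differentiable hσ hf hfM hf'M x).const_mul _

lemma norm_fderiv_dampedHeat_le (hσ : 0 < σ) {f : EuclideanSpace ℝ (Fin N) → ℝ}
    (hf : Differentiable ℝ f) {M : ℝ} (hfM : ∀ y, ‖f y‖ ≤ M) {M' : ℝ}
    (hf'M : ∀ y, ‖fderiv ℝ f y‖ ≤ M') (x : EuclideanSpace ℝ (Fin N)) :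
    ‖fderiv ℝ (dampedHeat N ρ σ f) x‖ ≤ exp (-ρ * σ) * M' := by
  rw [(hasFDerivAt_dampedHeat_of_differentiable hσ hf hfM hf'M x).fderiv, norm_smul,
    Real.norm_of_nonneg (exp_pos _).le]
  exact mul_le_mul_of_nonneg_left (norm_integral_heatKernel_sub_smul_le hσ hf'M x) (exp_pos _).le

variable {a b : ℝ} {v : ℝ → EuclideanSpace ℝ (Fin N) →ᵇ ℝ}

lemma continuousOn_eval_smul_kernel (hv : ContinuousOn v (Ioc a b)) {E : Type*}
    [NormedAddCommGroup E] [NormedSpace ℝ E] {K : ℝ → EuclideanSpace ℝ (Fin N) → E}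
    (hK : ContinuousOn (fun p : ℝ × EuclideanSpace ℝ (Fin N) => K p.1 p.2) (Ioi 0 ×ˢ univ))
    (x : EuclideanSpace ℝ (Fin N)) :
    ContinuousOn (fun p : ℝ × EuclideanSpace ℝ (Fin N) => v p.1 p.2 • K (p.1 - a) (x - p.2))
      (Ioc a b ×ˢ univ) := by
  refine ContinuousOn.smul ?_
    (hK.comp (f := fun p : ℝ × EuclideanSpace ℝ (Fin N) => (p.1 - a, x - p.2)) (by fun_prop)
      fun p hp => ⟨sub_pos.2 hp.1.1, trivial⟩)
  exact continuous_eval.comp_continuousOn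
    ((hv.comp continuousOn_fst fun p hp => hp.1).prodMk continuousOn_snd)

lemma aestronglyMeasurable_dampedHeat (hv : ContinuousOn v (Ioc a b))
    (x : EuclideanSpace ℝ (Fin N)) :
    AEStronglyMeasurable (fun s => dampedHeat N ρ (s - a) (v s) x)
      (volume.restrict (Ioc a b)) := by
  simp_rw [dampedHeat_eq, mul_comm (heatKernel _ _)]
  exact (Continuous.aestronglyMeasurable (by fun_prop)).mul
    (aestronglyMeasurable_setIntegral_of_continuousOn measurableSet_Ioc
      (continuousOn_eval_smul_kernel hv continuousOn_heatKernel_uncurry x))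

lemma aestronglyMeasurable_dampedHeatFDeriv (hv : ContinuousOn v (Ioc a b))
    (x : EuclideanSpace ℝ (Fin N)) :
    AEStronglyMeasurable (fun s => dampedHeatFDeriv N ρ (s - a) (v s) x)
      (volume.restrict (Ioc a b)) :=
  (Continuous.aestronglyMeasurable (f := fun s => exp (-ρ * (s - a))) (by fun_prop)).smul
    (aestronglyMeasurable_setIntegral_of_continuousOn measurableSet_Ioc
      (continuousOn_eval_smul_kernel hv continuousOn_heatKernelFDeriv_uncurry x))

lemma hasFDerivAt_setIntegral_dampedHeat (hρ : 0 ≤ ρ) (hv : ContinuousOn v (Ioc a b)) {M : ℝ}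
    (hvM : ∀ s ∈ Ioc a b, ‖v s‖ ≤ M) {B : ℝ → ℝ} (hB : IntegrableOn B (Ioc a b))
    (hvB : ∀ s ∈ Ioc a b, ∀ x, ‖dampedHeatFDeriv N ρ (s - a) (v s) x‖ ≤ B s)
    (x₀ : EuclideanSpace ℝ (Fin N)) :
    HasFDerivAt (fun x => ∫ s in Ioc a b, dampedHeat N ρ (s - a) (v s) x)
      (∫ s in Ioc a b, dampedHeatFDeriv N ρ (s - a) (v s) x₀) x₀ := by
  refine hasFDerivAt_integral_of_dominated_of_fderiv_le Filter.univ_mem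
    (.of_forall fun x => aestronglyMeasurable_dampedHeat hv x)
    ((integrableOn_const (C := M) measure_Ioc_lt_top.ne).mono'
      (aestronglyMeasurable_dampedHeat hv x₀)
      (ae_restrict_of_forall_mem measurableSet_Ioc fun s hs => ?_))
    (aestronglyMeasurable_dampedHeatFDeriv hv x₀)
    (ae_restrict_of_forall_mem measurableSet_Ioc fun s hs x _ => hvB s hs x) hB
    (ae_restrict_of_forall_mem measurableSet_Ioc fun s hs x _ => hasFDerivAt_dampedHeat
      (sub_pos.2 hs.1) (v s).continuous.aestronglyMeasurable (v s).norm_coe_le_norm x)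
  have hdecay : exp (-ρ * (s - a)) ≤ 1 :=
    exp_le_one_iff.2 (mul_nonpos_of_nonpos_of_nonneg (neg_nonpos.2 hρ) (sub_pos.2 hs.1).le)
  calc ‖dampedHeat N ρ (s - a) (v s) x₀‖ ≤ exp (-ρ * (s - a)) * ‖v s‖ :=
        norm_dampedHeat_le (sub_pos.2 hs.1) (v s).norm_coe_le_norm x₀
    _ ≤ 1 * M := mul_le_mul hdecay (hvM s hs) (norm_nonneg _) zero_le_one
    _ = M := one_mul M

lemma exists_hasFDerivAt_duhamel_le {β C Ctil : ℝ} (hβ0 : 0 ≤ β) (hβ : β < ρ) (hC : 0 ≤ C)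
    (hCtil : 0 ≤ Ctil) {w : ℝ → EuclideanSpace ℝ (Fin N) →ᵇ ℝ}
    (hw : ContinuousOn w (Ici a)) (hwb : ∀ s, a ≤ s → ‖w s‖ ≤ Ctil * exp (-β * (s - a)))
    (hCN : ∀ σ > 0, ∀ g : EuclideanSpace ℝ (Fin N) →ᵇ ℝ, (⨆ x, ‖gradient (dampedHeat N ρ σ g) x‖)
      ≤ C * σ ^ (-(1 : ℝ) / 2) * exp (-ρ * σ) * ⨆ x, |g x|)
    (x : EuclideanSpace ℝ (Fin N)) :
    ∃ D : EuclideanSpace ℝ (Fin N) →L[ℝ] ℝ,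
      HasFDerivAt (fun x => ∫ s in Ioc a b, dampedHeat N ρ (s - a) (w (b - s + a)) x) D x ∧
      ‖D‖ ≤ exp (-β * (b - a)) *
        (C * Ctil * ∫ u in Ioi 0, u ^ (-(1 : ℝ) / 2) * exp (-(ρ - β) * u)) := by
  set f := fun u : ℝ => u ^ (-(1 : ℝ) / 2) * exp (-(ρ - β) * u) with hf_def
  have hf : IntegrableOn f (Ioi 0) := integrableOn_rpow_neg_half_mul_exp_neg (sub_pos.2 hβ)
  have hwt : ∀ s ∈ Ioc a b, ‖w (b - s + a)‖ ≤ Ctil * exp (-β * (b - s)) := fun s hs => by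
    simpa using hwb (b - s + a) (by linarith [hs.2])
  have hvB : ∀ s ∈ Ioc a b, ∀ x, ‖dampedHeatFDeriv N ρ (s - a) (w (b - s + a)) x‖ ≤
      C * Ctil * exp (-β * (b - a)) * f (s - a) := by
    intro s hs x
    have hσ : 0 < s - a := sub_pos.2 hs.1
    have hexp : exp (-ρ * (s - a)) * exp (-β * (b - s)) =
        exp (-β * (b - a)) * exp (-(ρ - β) * (s - a)) := by
      rw [← exp_add, ← exp_add]; ring_nf
    calc _ ≤ C * (s - a) ^ (-(1 : ℝ) / 2) * exp (-ρ * (s - a)) * ‖w (b - s + a)‖ :=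
          norm_dampedHeatFDeriv_le_of_iSup_le hσ _ (hCN _ hσ _) x
      _ ≤ C * (s - a) ^ (-(1 : ℝ) / 2) * exp (-ρ * (s - a)) * (Ctil * exp (-β * (b - s))) := by
          gcongr; exact hwt s hs
      _ = _ := by
          simp only [hf_def]; linear_combination (C * Ctil * (s - a) ^ (-(1 : ℝ) / 2)) * hexp
  have hvM : ∀ s ∈ Ioc a b, ‖w (b - s + a)‖ ≤ Ctil := fun s hs =>
    (hwt s hs).trans (mul_le_of_le_one_right hCtil (exp_le_one_iff.2
      (mul_nonpos_of_nonpos_of_nonneg (neg_nonpos.2 hβ0) (sub_nonneg.2 hs.2))))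
  refine ⟨_, hasFDerivAt_setIntegral_dampedHeat (hβ0.trans hβ.le)
    (hw.comp (by fun_prop) fun s hs => by simp only [mem_Ici]; linarith [hs.2]) hvM
    ((integrableOn_Ioc_comp_sub hf a b).const_mul _) hvB x, ?_⟩
  rw [← mul_assoc, mul_comm (exp _)]
  exact norm_setIntegral_Ioc_le_of_le_comp_sub hf
    (fun u hu => mul_nonneg (rpow_nonneg (le_of_lt hu) _) (exp_pos _).le) (by positivity)
    fun s hs => hvB s hs x

end DampedHeat

theorem stmt_13_general (N : ℕ) (lam μ β : ℝ) (hμ : 0 < μ)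
    (hβ0 : 0 < β) (hβ : β < lam) (T : ℝ) (Ctil : ℝ) (hCtil : 0 < Ctil)
    (ψT : EuclideanSpace ℝ (Fin N) → ℝ) (hψTd : ContDiff ℝ 1 ψT)
    (hψTb : ∃ M : ℝ, ∀ x, |ψT x| ≤ M) (hψTg : ∃ M : ℝ, ∀ x, ‖gradient ψT x‖ ≤ M)
    (w : ℝ → (EuclideanSpace ℝ (Fin N) →ᵇ ℝ))
    (hw : ContinuousOn w (Set.Ici T))
    (hwb : ∀ s : ℝ, T ≤ s → ‖w s‖ ≤ Ctil * Real.exp (-β * (s - T)))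
    (ψ : ℝ → EuclideanSpace ℝ (Fin N) → ℝ)
    (hψ : ∀ (t : ℝ) (x : EuclideanSpace ℝ (Fin N)),
      ψ t x = dampedHeat N lam (t - T) ψT x +
        μ * ∫ s in Set.Ioc T t, dampedHeat N lam (s - T) (⇑(w (t - s + T))) x)
    (C_N : ℝ)
    (hCN : ∀ s : ℝ, 0 < s → ∀ g : EuclideanSpace ℝ (Fin N) → ℝ,
      Continuous g → (∃ M : ℝ, ∀ x, |g x| ≤ M) →
      (⨆ x, ‖gradient (dampedHeat N lam s g) x‖) ≤
        C_N * s ^ (-(1 : ℝ) / 2) * Real.exp (-lam * s) * ⨆ x, |g x|)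
    (C₃ : ℝ)
    (hC₃ : C₃ = ∫ s in Set.Ioi (0 : ℝ), s ^ (-(1 : ℝ) / 2) * Real.exp (-(lam - β) * s)) :
    ∀ t : ℝ, T < t →
      (⨆ x, ‖gradient (ψ t) x‖) ≤
        Real.exp (-β * (t - T)) * ((⨆ x, ‖gradient ψT x‖) + μ * Ctil * C_N * C₃) := by
  intro t ht
  obtain ⟨M, hM⟩ := hψTb
  obtain ⟨M', hM'⟩ := hψTg
  have hG : ∀ x, ‖fderiv ℝ ψT x‖ ≤ ⨆ x, ‖gradient ψT x‖ := fun x =>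
    norm_gradient ψT x ▸ le_ciSup ⟨M', forall_mem_range.2 hM'⟩ x
  -- the smoothing estimate tested on a constant function
  have hCN0 : 0 ≤ C_N := by
    have h := hCN 1 one_pos _ continuous_const ⟨1, fun _ => abs_one.le⟩
    simp only [dampedHeat_const one_pos, gradient_fun_const, norm_zero, ciSup_const, abs_one,
      one_rpow, mul_one] at h
    exact nonneg_of_mul_nonneg_left h (exp_pos _)
  refine ciSup_le fun x => ?_
  obtain ⟨D, hD, hDle⟩ := exists_hasFDerivAt_duhamel_le hβ0.le hβ hCN0 hCtil.le hw hwb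
    (fun σ hσ g => hCN σ hσ g g.continuous ⟨‖g‖, g.norm_coe_le_norm⟩) x
  have hψTd' : Differentiable ℝ ψT := hψTd.differentiable one_ne_zero
  have hheat := (hasFDerivAt_dampedHeat_of_differentiable (ρ := lam) (sub_pos.2 ht) hψTd' hM hG
    x).differentiableAt.hasFDerivAt
  have hdecay : exp (-lam * (t - T)) ≤ exp (-β * (t - T)) :=
    exp_le_exp.2 (mul_le_mul_of_nonneg_right (neg_le_neg hβ.le) (sub_pos.2 ht).le)
  rw [norm_gradient, funext (hψ t), (hheat.fun_add (hD.const_mul μ)).fderiv]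
  rw [← hC₃] at hDle
  calc _ ≤ ‖fderiv ℝ (dampedHeat N lam (t - T) ψT) x‖ + μ * ‖D‖ :=
        (norm_add_le _ _).trans_eq (by rw [norm_smul, Real.norm_of_nonneg hμ.le])
    _ ≤ exp (-β * (t - T)) * (⨆ x, ‖gradient ψT x‖) +
        μ * (exp (-β * (t - T)) * (C_N * Ctil * C₃)) := by
        refine add_le_add ?_ (mul_le_mul_of_nonneg_left hDle hμ.le)
        exact (norm_fderiv_dampedHeat_le (sub_pos.2 ht) hψTd' hM hG x).trans
          (mul_le_mul_of_nonneg_right hdecay ((norm_nonneg _).trans (hG x)))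
    _ = _ := by ring

theorem stmt_13 (N : ℕ) (hN : 1 ≤ N) (lam μ β : ℝ) (hlam : 0 < lam) (hμ : 0 < μ)
    (hβ0 : 0 < β) (hβ : β < lam) (T : ℝ) (hT : 0 ≤ T) (Ctil : ℝ) (hCtil : 0 < Ctil)
    (ψT : EuclideanSpace ℝ (Fin N) → ℝ) (hψTd : ContDiff ℝ 1 ψT)
    (hψTb : ∃ M : ℝ, ∀ x, |ψT x| ≤ M) (hψTg : ∃ M : ℝ, ∀ x, ‖gradient ψT x‖ ≤ M)
    (w : ℝ → (EuclideanSpace ℝ (Fin N) →ᵇ ℝ))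
    (hw : ContinuousOn w (Set.Ici T))
    (hwb : ∀ s : ℝ, T ≤ s → ‖w s‖ ≤ Ctil * Real.exp (-β * (s - T)))
    (ψ : ℝ → EuclideanSpace ℝ (Fin N) → ℝ)
    (hψ : ∀ (t : ℝ) (x : EuclideanSpace ℝ (Fin N)),
      ψ t x = dampedHeat N lam (t - T) ψT x +
        μ * ∫ s in Set.Ioc T t, dampedHeat N lam (s - T) (⇑(w (t - s + T))) x)
    (C_N : ℝ)
    (hCN : ∀ s : ℝ, 0 < s → ∀ g : EuclideanSpace ℝ (Fin N) → ℝ,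
      Continuous g → (∃ M : ℝ, ∀ x, |g x| ≤ M) →
      (⨆ x, ‖gradient (dampedHeat N lam s g) x‖) ≤
        C_N * s ^ (-(1 : ℝ) / 2) * Real.exp (-lam * s) * ⨆ x, |g x|)
    (C₃ : ℝ)
    (hC₃ : C₃ = ∫ s in Set.Ioi (0 : ℝ), s ^ (-(1 : ℝ) / 2) * Real.exp (-(lam - β) * s)) :
    ∀ t : ℝ, T < t →
      (⨆ x, ‖gradient (ψ t) x‖) ≤
        Real.exp (-β * (t - T)) * ((⨆ x, ‖gradient ψT x‖) + μ * Ctil * C_N * C₃) :=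
  stmt_13_general N lam μ β hμ hβ0 hβ T Ctil hCtil ψT hψTd hψTb hψTg w hw hwb ψ hψ C_N hCN C₃ hC₃
end
end

section
/- Let a, b > 0 and γ ∈ (1, 2), and set K = (a/b)^{1/(γ−1)}. Then for every real z ≥ −K one has |a(γ z + K) − b (z + K)^γ| ≤ a(γ−1) (b/a)^{1/(γ−1)} z². -/
/-! With `t = (z + K) / K` the expression becomes `a K (γ t - (γ - 1) - t ^ γ)`, the gap between
`t ^ γ` and its tangent line at `t = 1`. Bernoulli's inequality puts `t ^ γ` above the tangent, and
weighted AM-GM applied to `t ^ γ = (t ^ 2) ^ (γ - 1) * t ^ (2 - γ)` bounds the gap by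
`(γ - 1) (t - 1) ^ 2`. -/

open Real

lemma rpow_le_weighted_sq_add {γ t : ℝ} (hγ1 : 1 ≤ γ) (hγ2 : γ ≤ 2) (ht : 0 ≤ t) :
    t ^ γ ≤ (γ - 1) * t ^ 2 + (2 - γ) * t := by
  have hsplit : (t ^ 2) ^ (γ - 1) * t ^ (2 - γ) = t ^ γ := by
    rw [← rpow_natCast t 2, ← rpow_mul ht, ← rpow_add' ht (by norm_num; linarith)]
    congr 1
    push_cast
    ring
  rw [← hsplit]
  exact geom_mean_le_arith_mean2_weighted (by linarith) (by linarith) (sq_nonneg t) ht (by ring)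

lemma abs_rpow_sub_tangent_le {γ t : ℝ} (hγ1 : 1 ≤ γ) (hγ2 : γ ≤ 2) (ht : 0 ≤ t) :
    |γ * t - (γ - 1) - t ^ γ| ≤ (γ - 1) * (t - 1) ^ 2 := by
  have hbernoulli : 1 + γ * (t - 1) ≤ t ^ γ := by
    simpa using one_add_mul_self_le_rpow_one_add (by linarith : (-1 : ℝ) ≤ t - 1) hγ1
  have hamgm := rpow_le_weighted_sq_add hγ1 hγ2 ht
  rw [abs_le]
  constructor <;> nlinarith [sq_nonneg (t - 1)]

lemma abs_logistic_source_le {a b γ K z : ℝ} (ha : 0 < a) (hγ1 : 1 ≤ γ) (hγ2 : γ ≤ 2)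
    (hK : 0 < K) (hbK : b * K ^ (γ - 1) = a) (hz : -K ≤ z) :
    |a * (γ * z + K) - b * (z + K) ^ γ| ≤ a * (γ - 1) * K⁻¹ * z ^ 2 := by
  set t := (z + K) / K
  have ht : 0 ≤ t := div_nonneg (by linarith) hK.le
  have hz_eq : z = K * (t - 1) := by
    have : K * t = z + K := mul_div_cancel₀ _ hK.ne'
    linarith
  have hpow : b * (z + K) ^ γ = a * K * t ^ γ := by
    rw [hz_eq, show K * (t - 1) + K = K * t by ring, mul_rpow hK.le ht,
      show γ = (γ - 1) + 1 by ring, rpow_add hK, rpow_one, ← hbK]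
    ring_nf
  calc |a * (γ * z + K) - b * (z + K) ^ γ|
      = a * K * |γ * t - (γ - 1) - t ^ γ| := by
        rw [hpow, ← abs_of_pos (mul_pos ha hK), ← abs_mul, abs_of_pos (mul_pos ha hK), hz_eq]
        ring_nf
    _ ≤ a * K * ((γ - 1) * (t - 1) ^ 2) :=
        mul_le_mul_of_nonneg_left (abs_rpow_sub_tangent_le hγ1 hγ2 ht) (by positivity)
    _ = a * (γ - 1) * K⁻¹ * z ^ 2 := by
        rw [hz_eq]
        field_simp

theorem stmt_16 (a b γ : ℝ) (ha : 0 < a) (hb : 0 < b) (hγ1 : 1 < γ) (hγ2 : γ < 2)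
    (K : ℝ) (hK : K = (a / b) ^ (1 / (γ - 1))) :
    ∀ z : ℝ, -K ≤ z →
      |a * (γ * z + K) - b * (z + K) ^ γ| ≤ a * (γ - 1) * (b / a) ^ (1 / (γ - 1)) * z ^ 2 := by
  intro z hz
  have hab : 0 ≤ a / b := (div_pos ha hb).le
  have hK_pos : 0 < K := hK ▸ rpow_pos_of_pos (div_pos ha hb) _
  have hbK : b * K ^ (γ - 1) = a := by
    rw [hK, one_div, rpow_inv_rpow hab (by linarith)]
    field_simp
  have hK_inv : (b / a) ^ (1 / (γ - 1)) = K⁻¹ := by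
    rw [hK, ← inv_div, inv_rpow hab]
  rw [hK_inv]
  exact abs_logistic_source_le ha hγ1.le hγ2.le hK_pos hbK hz
end

section
/- Let K > 0 and ξ ∈ (0, K/4). Define a sequence of reals by l₀ = 1 and l_{n+1} = −(ξ/K) l_n² + 2 l_n − 1/2 for n ≥ 0. Then: (i) the sequence (l_n) is nondecreasing; (ii) l_n < K/ξ − 1/2 for all n ≥ 1; and (iii) (l_n) converges with limit l̃ = (K/(2ξ)) (1 + √(1 − 2ξ/K)). -/
open Filter Topology

set_option maxHeartbeats 1600000 in
theorem stmt_17 (K ξ : ℝ) (hK : 0 < K) (hξ0 : 0 < ξ) (hξ : ξ < K / 4)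
    (l : ℕ → ℝ) (hl0 : l 0 = 1)
    (hrec : ∀ n : ℕ, l (n + 1) = -(ξ / K) * (l n) ^ 2 + 2 * l n - 1 / 2) :
    Monotone l ∧
    (∀ n : ℕ, 1 ≤ n → l n < K / ξ - 1 / 2) ∧
    Filter.Tendsto l Filter.atTop
      (nhds (K / (2 * ξ) * (1 + Real.sqrt (1 - 2 * ξ / K)))) := by
  set c := ξ / K with hc_def
  have hc0 : 0 < c := by positivity
  have hc4 : c < 1 / 4 := by
    rw [hc_def, div_lt_div_iff₀ hK (by norm_num : (0:ℝ) < 4)]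
    have := (lt_div_iff₀ (by norm_num : (0:ℝ) < 4)).mp hξ
    linarith
  have h12c : 0 < 1 - 2 * c := by linarith
  set s := Real.sqrt (1 - 2 * c) with hs_def
  have hs2 : s ^ 2 = 1 - 2 * c := Real.sq_sqrt h12c.le
  have hs0 : 0 < s := Real.sqrt_pos.mpr h12c
  have hs1 : s < 1 := by nlinarith [hs2, hs0]
  set L := (1 + s) / (2 * c) with hL_def
  clear_value c s L
  have h2c0 : (0:ℝ) < 2 * c := by linarith
  have hcts : 1 - s < 2 * c := by nlinarith [hs2, hs0, hs1]
  have hL2 : 2 < L := by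
    rw [hL_def, lt_div_iff₀ h2c0]; nlinarith
  -- key invariant
  have key : ∀ n, 1 ≤ l n ∧ l n < L := by
    intro n
    induction n with
    | zero => exact ⟨le_of_eq hl0.symm, by rw [hl0]; linarith⟩
    | succ n ih =>
      obtain ⟨h1, h2⟩ := ih
      have hu : 2 * c * l n < 1 + s := by
        rw [hL_def, lt_div_iff₀ h2c0] at h2; linarith [h2]
      have hA : 0 ≤ 2 * c * l n - (1 - s) := by nlinarith
      have hstep : l n ≤ l (n + 1) := by
        rw [hrec n]
        nlinarith [mul_nonneg hA (by linarith : (0:ℝ) ≤ 1 + s - 2 * c * l n), hc0]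
      refine ⟨by linarith, ?_⟩
      rw [hrec n, hL_def, lt_div_iff₀ h2c0]
      nlinarith [mul_pos (by linarith : (0:ℝ) < 1 + s - 2 * c * l n)
        (by nlinarith : (0:ℝ) < 3 - s - 2 * c * l n), hs2]
  have hstep : ∀ n, l n ≤ l (n + 1) := by
    intro n
    obtain ⟨h1, h2⟩ := key n
    have hu : 2 * c * l n < 1 + s := by
      rw [hL_def, lt_div_iff₀ h2c0] at h2; linarith [h2]
    have hA : 0 ≤ 2 * c * l n - (1 - s) := by nlinarith
    rw [hrec n]
    nlinarith [mul_nonneg hA (by linarith : (0:ℝ) ≤ 1 + s - 2 * c * l n), hc0]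
  have hmono : Monotone l := monotone_nat_of_le_succ hstep
  -- bound
  have hLbound : L ≤ K / ξ - 1 / 2 := by
    have hKξ : K / ξ = 1 / c := by rw [hc_def, one_div_div]
    rw [hKξ, hL_def, div_le_iff₀ h2c0]
    have hs_le : s ≤ 1 - c := by nlinarith [hs2, hs0]
    have hinv : c * (1 / c) = 1 := by field_simp
    nlinarith [hinv, hs_le]
  have hbound : ∀ n : ℕ, 1 ≤ n → l n < K / ξ - 1 / 2 := by
    intro n _
    exact lt_of_lt_of_le (key n).2 hLbound
  -- convergence
  have hbdd : BddAbove (Set.range l) := by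
    refine ⟨L, ?_⟩
    rintro x ⟨n, rfl⟩
    exact (key n).2.le
  have htend : Tendsto l atTop (nhds (⨆ n, l n)) := tendsto_atTop_ciSup hmono hbdd
  set A := ⨆ n, l n with hA_def
  clear_value A
  have hA_le : A ≤ L := by rw [hA_def]; exact ciSup_le fun n => (key n).2.le
  have hA_ge : 1 ≤ A := by rw [hA_def]; exact hl0 ▸ le_ciSup hbdd 0
  have h1 : Tendsto (fun n => l (n + 1)) atTop (nhds A) :=
    htend.comp (tendsto_add_atTop_nat 1)
  have h2 : Tendsto (fun n => -c * (l n) ^ 2 + 2 * l n - 1 / 2) atTop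
      (nhds (-c * A ^ 2 + 2 * A - 1 / 2)) := by
    exact ((tendsto_const_nhds.mul (htend.pow 2)).add
      (tendsto_const_nhds.mul htend)).sub tendsto_const_nhds
  have hfix : -c * A ^ 2 + 2 * A - 1 / 2 = A := by
    refine tendsto_nhds_unique ?_ h1
    exact h2.congr fun n => (hrec n).symm
  have hfix' : -c * A ^ 2 + A - 1 / 2 = 0 := by linarith
  have hfactor : (2 * c * A - 1 - s) * (2 * c * A - 1 + s) = 0 := by
    linear_combination (-4 * c) * hfix' - hs2
  have hAL : A = L := by
    clear htend h1 h2 hbdd hmono key hrec hstep hbound hfix hfix' hl0 hLbound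
    rcases mul_eq_zero.mp hfactor with h | h
    · rw [hL_def, eq_div_iff (ne_of_gt h2c0)]; linarith
    · exfalso
      have : 2 * c * A ≥ 2 * c := by nlinarith
      linarith
  have hgoal : K / (2 * ξ) * (1 + Real.sqrt (1 - 2 * ξ / K)) = L := by
    have harg : 1 - 2 * ξ / K = 1 - 2 * c := by rw [hc_def]; ring
    rw [harg, ← hs_def, hL_def, eq_div_iff (ne_of_gt h2c0)]
    have hone : K / (2 * ξ) * (2 * c) = 1 := by
      rw [hc_def]; field_simp
    linear_combination (1 + s) * hone
  exact ⟨hmono, hbound, by rw [hgoal, ← hAL]; exact htend⟩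
end

section
/- Let N ≥ 1, χ, a, b > 0 and T > 0, and let u, v : ℝ^N × (0,T) → ℝ be smooth functions with u ≥ 0 satisfying u_t = Δu − χ∇·(u∇v) + a u − b u² and v_t = Δv + u − v pointwise on ℝ^N × (0,T). Then the function z := (1/2)|∇v|² + u/χ satisfies the pointwise differential inequality z_t ≤ Δz − |∇v|² − (b/χ − N/4) u² + (a/χ) u on ℝ^N × (0,T). -/
open MeasureTheory
open scoped RealInnerProductSpace

noncomputable section

/-- Laplacian of `f : ℝ^N → ℝ` as the sum of the second directional derivatives along the
coordinate directions. -/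
def lap (N : ℕ) (f : EuclideanSpace ℝ (Fin N) → ℝ) (x : EuclideanSpace ℝ (Fin N)) : ℝ :=
  ∑ i : Fin N,
    fderiv ℝ (fun y => fderiv ℝ f y (EuclideanSpace.single i 1)) x (EuclideanSpace.single i 1)

/-- Divergence of a vector field `V : ℝ^N → ℝ^N`. -/
def diver (N : ℕ) (V : EuclideanSpace ℝ (Fin N) → EuclideanSpace ℝ (Fin N))
    (x : EuclideanSpace ℝ (Fin N)) : ℝ :=
  ∑ i : Fin N, fderiv ℝ V x (EuclideanSpace.single i 1) i

section helpers

variable {G : Type*} [NormedAddCommGroup G] [NormedSpace ℝ G]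

lemma cd_fderiv_apply {f : G → ℝ} {x : G} (hf : ContDiffAt ℝ (⊤ : ℕ∞) f x) (w : G) :
    ContDiffAt ℝ (⊤ : ℕ∞) (fun y => fderiv ℝ f y w) x :=
  ((ContinuousLinearMap.apply ℝ ℝ w).contDiff.contDiffAt).comp x (hf.fderiv_right (by simp))

lemma fderiv_fderiv_apply {f : G → ℝ} {x : G} (hf : ContDiffAt ℝ (⊤ : ℕ∞) f x) (w w' : G) :
    fderiv ℝ (fun y => fderiv ℝ f y w) x w' = fderiv ℝ (fderiv ℝ f) x w' w := by
  have h1 : DifferentiableAt ℝ (fderiv ℝ f) x :=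
    (hf.fderiv_right (m := (⊤ : ℕ∞)) (by simp)).differentiableAt (by simp)
  rw [fderiv_clm_apply (c := fderiv ℝ f) (u := fun _ => w) h1 (differentiableAt_const w)]
  simp

lemma symm_swap {f : G → ℝ} {x : G} (hf : ContDiffAt ℝ (⊤ : ℕ∞) f x) (w w' : G) :
    fderiv ℝ (fun y => fderiv ℝ f y w) x w' = fderiv ℝ (fun y => fderiv ℝ f y w') x w := by
  rw [fderiv_fderiv_apply hf, fderiv_fderiv_apply hf]
  exact (hf.isSymmSndFDerivAt (by rw [minSmoothness_of_isRCLikeNormedField]; exact WithTop.coe_le_coe.mpr le_top)) w' w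

lemma slice_x {F : ℝ × G → ℝ} {t : ℝ} {x : G} (hF : DifferentiableAt ℝ F (t, x)) (h : G) :
    fderiv ℝ (fun z => F (t, z)) x h = fderiv ℝ F (t, x) (0, h) := by
  have hp : HasFDerivAt (fun z : G => ((t : ℝ), z))
      (((0 : G →L[ℝ] ℝ)).prod (ContinuousLinearMap.id ℝ G)) x :=
    (hasFDerivAt_const t x).prodMk (hasFDerivAt_id x)
  have h2 := (hF.hasFDerivAt.comp x hp).fderiv
  rw [show (F ∘ fun z : G => ((t : ℝ), z)) = (fun z => F (t, z)) from rfl] at h2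
  rw [h2]; simp

lemma slice_t {F : ℝ × G → ℝ} {t : ℝ} {x : G} (hF : DifferentiableAt ℝ F (t, x)) :
    HasDerivAt (fun s => F (s, x)) (fderiv ℝ F (t, x) (1, 0)) t := by
  have hp : HasDerivAt (fun s : ℝ => (s, x)) ((1 : ℝ), (0 : G)) t :=
    (hasDerivAt_id t).prodMk (hasDerivAt_const t x)
  exact hF.hasFDerivAt.comp_hasDerivAt t hp

end helpers

section euclid

variable {N : ℕ}

def sg (N : ℕ) (i : Fin N) : EuclideanSpace ℝ (Fin N) := EuclideanSpace.single i 1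

lemma grad_coord (f : EuclideanSpace ℝ (Fin N) → ℝ) (x : EuclideanSpace ℝ (Fin N)) (i : Fin N) :
    gradient f x i = fderiv ℝ f x (sg N i) := by
  have h1 : (inner ℝ (gradient f x) (sg N i) : ℝ) = fderiv ℝ f x (sg N i) := by
    rw [gradient]; exact InnerProductSpace.toDual_symm_apply
  have h2 : (inner ℝ (sg N i) (gradient f x) : ℝ) = gradient f x i := by
    simpa [sg] using EuclideanSpace.inner_single_left (𝕜 := ℝ) i 1 (gradient f x)
  rw [← h2, real_inner_comm, h1]

lemma norm_sq_coords (y : EuclideanSpace ℝ (Fin N)) : ‖y‖ ^ 2 = ∑ i, (y i) ^ 2 := by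
  rw [← real_inner_self_eq_norm_sq]
  rw [PiLp.inner_apply]; simp [sq]

lemma lap_eq (f : EuclideanSpace ℝ (Fin N) → ℝ) (x : EuclideanSpace ℝ (Fin N)) :
    lap N f x = ∑ i, fderiv ℝ (fun y => fderiv ℝ f y (sg N i)) x (sg N i) := rfl

end euclid

set_option maxHeartbeats 2000000 in
theorem stmt_19 (N : ℕ) (hN : 1 ≤ N) (χ a b T : ℝ)
    (hχ : 0 < χ) (ha : 0 < a) (hb : 0 < b) (hT : 0 < T)
    (u v : ℝ → EuclideanSpace ℝ (Fin N) → ℝ)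
    (hu_smooth : ContDiffOn ℝ (⊤ : ℕ∞) (fun p : ℝ × EuclideanSpace ℝ (Fin N) => u p.1 p.2)
      (Set.Ioo 0 T ×ˢ (Set.univ : Set (EuclideanSpace ℝ (Fin N)))))
    (hv_smooth : ContDiffOn ℝ (⊤ : ℕ∞) (fun p : ℝ × EuclideanSpace ℝ (Fin N) => v p.1 p.2)
      (Set.Ioo 0 T ×ˢ (Set.univ : Set (EuclideanSpace ℝ (Fin N)))))
    (hu_nonneg : ∀ t ∈ Set.Ioo (0 : ℝ) T, ∀ x, 0 ≤ u t x)
    (heq_u : ∀ t ∈ Set.Ioo (0 : ℝ) T, ∀ x,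
      deriv (fun s => u s x) t =
        lap N (u t) x - χ * diver N (fun y => u t y • gradient (v t) y) x
          + a * u t x - b * u t x ^ 2)
    (heq_v : ∀ t ∈ Set.Ioo (0 : ℝ) T, ∀ x,
      deriv (fun s => v s x) t = lap N (v t) x + u t x - v t x) :
    ∀ t ∈ Set.Ioo (0 : ℝ) T, ∀ x,
      deriv (fun s => 1 / 2 * ‖gradient (v s) x‖ ^ 2 + u s x / χ) t ≤
        lap N (fun y => 1 / 2 * ‖gradient (v t) y‖ ^ 2 + u t y / χ) x
          - ‖gradient (v t) x‖ ^ 2 - (b / χ - (N : ℝ) / 4) * u t x ^ 2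
          + a / χ * u t x := by
  intro t ht x
  have hSopen : IsOpen ((Set.Ioo (0:ℝ) T) ×ˢ (Set.univ : Set (EuclideanSpace ℝ (Fin N)))) :=
    isOpen_Ioo.prod isOpen_univ
  set F : ℝ × EuclideanSpace ℝ (Fin N) → ℝ := fun p => v p.1 p.2 with hFdef
  set U : ℝ × EuclideanSpace ℝ (Fin N) → ℝ := fun p => u p.1 p.2 with hUdef
  have hF : ∀ s ∈ Set.Ioo (0:ℝ) T, ∀ y, ContDiffAt ℝ (⊤ : ℕ∞) F (s, y) := fun s hs y =>
    hv_smooth.contDiffAt (hSopen.mem_nhds (by simp [hs]))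
  have hU : ∀ s ∈ Set.Ioo (0:ℝ) T, ∀ y, ContDiffAt ℝ (⊤ : ℕ∞) U (s, y) := fun s hs y =>
    hu_smooth.contDiffAt (hSopen.mem_nhds (by simp [hs]))
  -- smoothness of slices in x
  have hslice : ∀ (H : ℝ × EuclideanSpace ℝ (Fin N) → ℝ) (s : ℝ) (y : EuclideanSpace ℝ (Fin N)),
      ContDiffAt ℝ (⊤ : ℕ∞) H (s, y) → ContDiffAt ℝ (⊤ : ℕ∞) (fun z => H (s, z)) y := by
    intro H s y hH
    have hin : ContDiffAt ℝ (⊤ : ℕ∞) (fun z : EuclideanSpace ℝ (Fin N) => ((s : ℝ), z)) y :=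
      contDiffAt_const.prodMk contDiffAt_id
    exact hH.comp y hin
  have hg : ∀ y, ContDiffAt ℝ (⊤ : ℕ∞) (v t) y := fun y => hslice F t y (hF t ht y)
  have hw : ∀ y, ContDiffAt ℝ (⊤ : ℕ∞) (u t) y := fun y => hslice U t y (hU t ht y)
  -- first derivatives in x
  have hDg : ∀ (i : Fin N) (y : EuclideanSpace ℝ (Fin N)),
      ContDiffAt ℝ (⊤ : ℕ∞) (fun z => fderiv ℝ (v t) z (sg N i)) y := fun i y =>
    cd_fderiv_apply (hg y) _
  have hDw : ∀ (i : Fin N) (y : EuclideanSpace ℝ (Fin N)),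
      ContDiffAt ℝ (⊤ : ℕ∞) (fun z => fderiv ℝ (u t) z (sg N i)) y := fun i y =>
    cd_fderiv_apply (hw y) _
  have hDDg : ∀ (i j : Fin N) (y : EuclideanSpace ℝ (Fin N)),
      ContDiffAt ℝ (⊤ : ℕ∞) (fun z => fderiv ℝ (fun z' => fderiv ℝ (v t) z' (sg N i)) z (sg N j)) y :=
    fun i j y => cd_fderiv_apply (hDg i y) _
  -- abbreviations for values at x
  set p : Fin N → ℝ := fun i => fderiv ℝ (v t) x (sg N i) with hpdef
  set q : Fin N → ℝ := fun i => fderiv ℝ (u t) x (sg N i) with hqdef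
  set h : Fin N → Fin N → ℝ :=
    fun i j => fderiv ℝ (fun y => fderiv ℝ (v t) y (sg N i)) x (sg N j) with hhdef
  set T3 : Fin N → Fin N → ℝ := fun i j =>
    fderiv ℝ (fun y => fderiv ℝ (fun z => fderiv ℝ (v t) z (sg N i)) y (sg N j)) x (sg N j)
    with hT3def
  set W : ℝ := u t x with hWdef
  have hlapv : lap N (v t) x = ∑ i, h i i := rfl
  have hlapu : lap N (u t) x = ∑ i, fderiv ℝ (fun y => fderiv ℝ (u t) y (sg N i)) x (sg N i) := rfl
  -- ∂ᵢ of the Laplacian of v t equals ∑ⱼ T3 i j (third-order Schwarz)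
  have hlap_swap : ∀ i : Fin N,
      fderiv ℝ (fun z => lap N (v t) z) x (sg N i) = ∑ j, T3 i j := by
    intro i
    have hcd : ∀ j : Fin N, ContDiffAt ℝ (⊤ : ℕ∞)
        (fun z => fderiv ℝ (fun y => fderiv ℝ (v t) y (sg N j)) z (sg N j)) x := fun j =>
      cd_fderiv_apply (hDg j x) _
    have hsum : fderiv ℝ (fun z => lap N (v t) z) x =
        ∑ j, fderiv ℝ (fun z =>
          fderiv ℝ (fun y => fderiv ℝ (v t) y (sg N j)) z (sg N j)) x := by
      rw [show (fun z => lap N (v t) z) = (fun z => ∑ j, (fun z' =>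
          fderiv ℝ (fun y => fderiv ℝ (v t) y (sg N j)) z' (sg N j)) z) from rfl]
      exact fderiv_fun_sum (fun j _ => (hcd j).differentiableAt (by simp))
    rw [hsum]
    rw [ContinuousLinearMap.sum_apply]
    refine Finset.sum_congr rfl (fun j _ => ?_)
    have step1 := symm_swap (hDg j x) (sg N j) (sg N i)
    have step2 : (fun z => fderiv ℝ (fun y => fderiv ℝ (v t) y (sg N j)) z (sg N i)) =
        (fun z => fderiv ℝ (fun y => fderiv ℝ (v t) y (sg N i)) z (sg N j)) := by
      funext z; exact symm_swap (hg z) (sg N j) (sg N i)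
    rw [step1, step2]
  -- the time-derivative of ∇v in coordinates
  have hF2 : ContDiffAt ℝ (⊤ : ℕ∞) (fderiv ℝ F) (t, x) := (hF t ht x).fderiv_right (by simp)
  have hqd : ∀ i : Fin N, HasDerivAt (fun s => fderiv ℝ F (s, x) (0, sg N i))
      (fderiv ℝ (fderiv ℝ F) (t, x) (1, 0) (0, sg N i)) t := by
    intro i
    have h1 : DifferentiableAt ℝ (fun pp => fderiv ℝ F pp ((0 : ℝ), sg N i)) (t, x) :=
      (cd_fderiv_apply (hF t ht x) _).differentiableAt (by simp)
    have h2 := slice_t h1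
    rwa [fderiv_fderiv_apply (hF t ht x)] at h2
  have hu' : HasDerivAt (fun s => u s x) (fderiv ℝ U (t, x) (1, 0)) t :=
    slice_t ((hU t ht x).differentiableAt (by simp))
  -- mixed second derivative identity
  have hmix : ∀ i : Fin N,
      fderiv ℝ (fderiv ℝ F) (t, x) (1, 0) (0, sg N i) = ∑ j, T3 i j + q i - p i := by
    intro i
    have hsymm := (hF t ht x).isSymmSndFDerivAt (by rw [minSmoothness_of_isRCLikeNormedField]; exact WithTop.coe_le_coe.mpr le_top) ((1 : ℝ), (0 : EuclideanSpace ℝ (Fin N)))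
      ((0 : ℝ), sg N i)
    rw [hsymm]
    have h1 : DifferentiableAt ℝ (fun pp => fderiv ℝ F pp ((1 : ℝ),
        (0 : EuclideanSpace ℝ (Fin N)))) (t, x) :=
      (cd_fderiv_apply (hF t ht x) _).differentiableAt (by simp)
    have h2 := slice_x (F := fun pp => fderiv ℝ F pp ((1 : ℝ), 0)) h1 (sg N i)
    rw [fderiv_fderiv_apply (hF t ht x)] at h2
    rw [← h2]
    have h3 : (fun z => fderiv ℝ F (t, z) ((1 : ℝ), 0)) =
        (fun z => lap N (v t) z + u t z - v t z) := by
      funext z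
      have h4 := (slice_t (F := F) ((hF t ht z).differentiableAt (by simp))).deriv
      have h5 : deriv (fun s => F (s, z)) t = deriv (fun s => v s z) t := rfl
      rw [h5] at h4
      rw [← h4, heq_v t ht z]
    rw [h3]
    have hlapdiff : DifferentiableAt ℝ (fun z => lap N (v t) z) x := by
      rw [show (fun z => lap N (v t) z) = (fun z => ∑ j, (fun z' =>
          fderiv ℝ (fun y => fderiv ℝ (v t) y (sg N j)) z' (sg N j)) z) from rfl]
      exact DifferentiableAt.fun_sum (fun j _ =>
        (cd_fderiv_apply (hDg j x) _).differentiableAt (by simp))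
    have hwd : DifferentiableAt ℝ (u t) x := (hw x).differentiableAt (by simp)
    have hvd : DifferentiableAt ℝ (v t) x := (hg x).differentiableAt (by simp)
    rw [fderiv_fun_sub (hlapdiff.fun_add hwd) hvd, fderiv_fun_add hlapdiff hwd]
    simp only [ContinuousLinearMap.sub_apply, ContinuousLinearMap.add_apply]
    rw [hlap_swap i]
  -- time derivative of z
  have hLHS : deriv (fun s => 1 / 2 * ‖gradient (v s) x‖ ^ 2 + u s x / χ) t =
      ∑ i, p i * (∑ j, T3 i j + q i - p i) + deriv (fun s => u s x) t / χ := by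
    have hev : (fun s => 1 / 2 * ‖gradient (v s) x‖ ^ 2 + u s x / χ) =ᶠ[nhds t]
        (fun s => 1 / 2 * (∑ i, (fderiv ℝ F (s, x) (0, sg N i)) ^ 2) + u s x / χ) := by
      filter_upwards [Ioo_mem_nhds ht.1 ht.2] with s hs
      have hdiff : DifferentiableAt ℝ F (s, x) := (hF s hs x).differentiableAt (by simp)
      rw [norm_sq_coords]
      have hco : ∀ i : Fin N, gradient (v s) x i = fderiv ℝ F (s, x) (0, sg N i) := by
        intro i
        rw [grad_coord]
        exact slice_x (t := s) hdiff (sg N i)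
      simp only [hco]
    rw [hev.deriv_eq]
    have hz : HasDerivAt
        (fun s => 1 / 2 * (∑ i, (fderiv ℝ F (s, x) (0, sg N i)) ^ 2) + u s x / χ)
        (1 / 2 * (∑ i, (2 : ℕ) * (fderiv ℝ F (t, x) (0, sg N i)) ^ 1 *
          (fderiv ℝ (fderiv ℝ F) (t, x) (1, 0) (0, sg N i))) + fderiv ℝ U (t, x) (1, 0) / χ) t :=
      ((HasDerivAt.fun_sum (fun i _ => (hqd i).fun_pow 2)).const_mul (1 / 2 : ℝ)).fun_add (hu'.div_const χ)
    rw [hz.deriv]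
    have hpF : ∀ i : Fin N, fderiv ℝ F (t, x) (0, sg N i) = p i := by
      intro i
      rw [hpdef]
      exact (slice_x ((hF t ht x).differentiableAt (by simp)) (sg N i)).symm
    have hud : deriv (fun s => u s x) t = fderiv ℝ U (t, x) (1, 0) := hu'.deriv
    simp only [hpF, hmix, hud]
    rw [Finset.mul_sum]
    congr 1
    refine Finset.sum_congr rfl (fun i _ => ?_)
    push_cast
    ring
  -- divergence identity
  have hdiver : diver N (fun y => u t y • gradient (v t) y) x =
      ∑ i, q i * p i + W * ∑ i, h i i := by
    have hgradrep : (gradient (v t)) = fun y => ∑ i, fderiv ℝ (v t) y (sg N i) • sg N i := by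
      funext y
      ext j
      rw [grad_coord]
      have hms : (∑ i : Fin N, fderiv ℝ (v t) y (sg N i) • sg N i) j
          = ∑ i : Fin N, (fderiv ℝ (v t) y (sg N i) • sg N i) j := by
        exact map_sum (EuclideanSpace.proj (𝕜 := ℝ) j)
          (fun i : Fin N => fderiv ℝ (v t) y (sg N i) • sg N i) Finset.univ
      rw [hms]
      simp [sg, EuclideanSpace.single_apply, PiLp.smul_apply]
    have hgd : ∀ y, DifferentiableAt ℝ (gradient (v t)) y := by
      intro y
      rw [hgradrep]
      exact DifferentiableAt.fun_sum fun i _ =>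
        ((hDg i y).differentiableAt (by simp)).smul_const (sg N i)
    have hVdiff : DifferentiableAt ℝ (fun y => u t y • gradient (v t) y) x :=
      ((hw x).differentiableAt (by simp)).smul (hgd x)
    have hcoord : ∀ i : Fin N, fderiv ℝ (fun y => u t y • gradient (v t) y) x (sg N i) i =
        fderiv ℝ (fun y => u t y * fderiv ℝ (v t) y (sg N i)) x (sg N i) := by
      intro i
      have h1 := ((EuclideanSpace.proj (𝕜 := ℝ) i).hasFDerivAt.comp x hVdiff.hasFDerivAt).fderiv
      have h2 : ((EuclideanSpace.proj (𝕜 := ℝ) i) ∘ fun y => u t y • gradient (v t) y) =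
          fun y => u t y * fderiv ℝ (v t) y (sg N i) := by
        funext y
        simp only [Function.comp_apply, PiLp.proj_apply, PiLp.smul_apply,
          smul_eq_mul]
        rw [grad_coord]
      rw [h2] at h1
      rw [h1]
      simp
    have hprod : ∀ i : Fin N,
        fderiv ℝ (fun y => u t y * fderiv ℝ (v t) y (sg N i)) x (sg N i) =
          q i * p i + W * h i i := by
      intro i
      have hm := ((((hw x).differentiableAt (by simp)).hasFDerivAt).fun_mul
        (((hDg i x).differentiableAt (by simp)).hasFDerivAt)).fderiv
      rw [hm]
      simp only [ContinuousLinearMap.add_apply, ContinuousLinearMap.smul_apply, smul_eq_mul]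
      ring
    have : diver N (fun y => u t y • gradient (v t) y) x =
        ∑ i, (q i * p i + W * h i i) := by
      rw [diver]
      exact Finset.sum_congr rfl (fun i _ => (hcoord i).trans (hprod i))
    rw [this, Finset.sum_add_distrib, ← Finset.mul_sum]
  -- Laplacian of z
  have hRHSlap : lap N (fun y => 1 / 2 * ‖gradient (v t) y‖ ^ 2 + u t y / χ) x =
      ∑ j, ∑ i, (h i j ^ 2 + p i * T3 i j) + lap N (u t) x / χ := by
    have hfun : (fun y => 1 / 2 * ‖gradient (v t) y‖ ^ 2 + u t y / χ) =
        (fun y => 1 / 2 * ∑ i, fderiv ℝ (v t) y (sg N i) * fderiv ℝ (v t) y (sg N i)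
          + u t y * χ⁻¹) := by
      funext y
      rw [norm_sq_coords, div_eq_mul_inv]
      congr 1
      congr 1
      refine Finset.sum_congr rfl (fun i _ => ?_)
      rw [grad_coord, pow_two]
    rw [hfun, lap_eq]
    have hinner : ∀ (j : Fin N) (y : EuclideanSpace ℝ (Fin N)),
        fderiv ℝ (fun z => 1 / 2 * ∑ i, fderiv ℝ (v t) z (sg N i) * fderiv ℝ (v t) z (sg N i)
          + u t z * χ⁻¹) y (sg N j)
        = ∑ i, fderiv ℝ (v t) y (sg N i) *
            fderiv ℝ (fun z => fderiv ℝ (v t) z (sg N i)) y (sg N j)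
          + fderiv ℝ (u t) y (sg N j) * χ⁻¹ := by
      intro j y
      have hterm : ∀ i ∈ Finset.univ, HasFDerivAt
          (fun z => fderiv ℝ (v t) z (sg N i) * fderiv ℝ (v t) z (sg N i))
          (fderiv ℝ (v t) y (sg N i) • fderiv ℝ (fun z => fderiv ℝ (v t) z (sg N i)) y
            + fderiv ℝ (v t) y (sg N i) • fderiv ℝ (fun z => fderiv ℝ (v t) z (sg N i)) y) y :=
        fun i _ => (((hDg i y).differentiableAt (by simp)).hasFDerivAt).mul
          (((hDg i y).differentiableAt (by simp)).hasFDerivAt)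
      have hsum := (((HasFDerivAt.fun_sum hterm).const_mul (1 / 2 : ℝ)).fun_add
        ((((hw y).differentiableAt (by simp)).hasFDerivAt).mul_const χ⁻¹)).fderiv
      rw [hsum]
      simp only [ContinuousLinearMap.add_apply, ContinuousLinearMap.smul_apply,
        ContinuousLinearMap.coe_sum', Finset.sum_apply, smul_eq_mul]
      congr 1
      · rw [Finset.mul_sum]
        refine Finset.sum_congr rfl (fun i _ => ?_)
        ring
      · exact mul_comm _ _
    have houter : ∀ j : Fin N,
        fderiv ℝ (fun y => ∑ i, fderiv ℝ (v t) y (sg N i) *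
            fderiv ℝ (fun z => fderiv ℝ (v t) z (sg N i)) y (sg N j)
          + fderiv ℝ (u t) y (sg N j) * χ⁻¹) x (sg N j)
        = ∑ i, (h i j ^ 2 + p i * T3 i j)
          + fderiv ℝ (fun y => fderiv ℝ (u t) y (sg N j)) x (sg N j) * χ⁻¹ := by
      intro j
      have hterm : ∀ i ∈ Finset.univ, HasFDerivAt
          (fun y => fderiv ℝ (v t) y (sg N i) *
            fderiv ℝ (fun z => fderiv ℝ (v t) z (sg N i)) y (sg N j))
          (fderiv ℝ (v t) x (sg N i) •
              fderiv ℝ (fun y => fderiv ℝ (fun z => fderiv ℝ (v t) z (sg N i)) y (sg N j)) x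
            + fderiv ℝ (fun z => fderiv ℝ (v t) z (sg N i)) x (sg N j) •
              fderiv ℝ (fun y => fderiv ℝ (v t) y (sg N i)) x) x :=
        fun i _ => (((hDg i x).differentiableAt (by simp)).hasFDerivAt).mul
          (((hDDg i j x).differentiableAt (by simp)).hasFDerivAt)
      have hsum := ((HasFDerivAt.fun_sum hterm).fun_add
        ((((hDw j x).differentiableAt (by simp)).hasFDerivAt).mul_const χ⁻¹)).fderiv
      rw [hsum]
      simp only [ContinuousLinearMap.add_apply, ContinuousLinearMap.smul_apply,
        ContinuousLinearMap.coe_sum', Finset.sum_apply, smul_eq_mul]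
      congr 1
      · refine Finset.sum_congr rfl (fun i _ => ?_)
        rw [hpdef, hhdef, hT3def]
        ring
      · exact mul_comm _ _
    have hstep : ∀ j : Fin N,
        fderiv ℝ (fun y => fderiv ℝ
          (fun z => 1 / 2 * ∑ i, fderiv ℝ (v t) z (sg N i) * fderiv ℝ (v t) z (sg N i)
            + u t z * χ⁻¹) y (sg N j)) x (sg N j)
        = ∑ i, (h i j ^ 2 + p i * T3 i j)
          + fderiv ℝ (fun y => fderiv ℝ (u t) y (sg N j)) x (sg N j) * χ⁻¹ := by
      intro j
      rw [funext (hinner j), houter j]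
    rw [Finset.sum_congr rfl (fun j _ => hstep j), Finset.sum_add_distrib, ← Finset.sum_mul,
      ← hlapu, div_eq_mul_inv]
  -- norm of gradient at x
  have hnorm : ‖gradient (v t) x‖ ^ 2 = ∑ i, p i ^ 2 := by
    rw [norm_sq_coords]
    refine Finset.sum_congr rfl (fun i _ => ?_)
    rw [grad_coord]
  -- final assembly
  rw [hLHS, heq_u t ht x, hdiver, hRHSlap, hnorm]
  have hkey : -(W * ∑ i, h i i) ≤ (∑ j, ∑ i, h i j ^ 2) + (N : ℝ) / 4 * W ^ 2 := by
    have h1 : ∀ i : Fin N, -(W * h i i) ≤ h i i ^ 2 + W ^ 2 / 4 := fun i => by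
      nlinarith [sq_nonneg (h i i + W / 2)]
    have h2 : ∑ i, -(W * h i i) ≤ ∑ i, (h i i ^ 2 + W ^ 2 / 4) :=
      Finset.sum_le_sum (fun i _ => h1 i)
    have h3 : ∑ i : Fin N, (h i i ^ 2 + W ^ 2 / 4) =
        (∑ i, h i i ^ 2) + (N : ℝ) * (W ^ 2 / 4) := by
      rw [Finset.sum_add_distrib, Finset.sum_const, Finset.card_univ, Fintype.card_fin,
        nsmul_eq_mul]
    have h4 : ∑ i : Fin N, h i i ^ 2 ≤ ∑ j, ∑ i, h i j ^ 2 :=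
      Finset.sum_le_sum (fun j _ =>
        Finset.single_le_sum (f := fun i => h i j ^ 2) (fun i _ => sq_nonneg _)
          (Finset.mem_univ j))
    have h5 : ∑ i, -(W * h i i) = -(W * ∑ i, h i i) := by
      rw [Finset.mul_sum, ← Finset.sum_neg_distrib]
    linarith
  have hsum_comm : ∑ i, p i * (∑ j, T3 i j + q i - p i) =
      (∑ j, ∑ i, p i * T3 i j) + (∑ i, p i * q i) - ∑ i, p i ^ 2 := by
    have hterm : ∀ i : Fin N, p i * (∑ j, T3 i j + q i - p i) =
        (∑ j, p i * T3 i j) + p i * q i - p i ^ 2 := by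
      intro i
      rw [mul_sub, mul_add, Finset.mul_sum]
      ring
    simp_rw [hterm]
    rw [Finset.sum_sub_distrib, Finset.sum_add_distrib,
      Finset.sum_comm (f := fun i j => p i * T3 i j)]
  have hsplit : ∑ j, ∑ i, (h i j ^ 2 + p i * T3 i j) =
      (∑ j, ∑ i, h i j ^ 2) + ∑ j, ∑ i, p i * T3 i j := by
    rw [← Finset.sum_add_distrib]
    refine Finset.sum_congr rfl (fun j _ => ?_)
    rw [← Finset.sum_add_distrib]
  rw [hsum_comm, hsplit]
  have hqp : ∑ i, q i * p i = ∑ i, p i * q i := by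
    refine Finset.sum_congr rfl (fun i _ => ?_); ring
  rw [hqp]
  have hχ' : χ ≠ 0 := ne_of_gt hχ
  have hexp : (lap N (u t) x - χ * ((∑ i, p i * q i) + W * ∑ i, h i i) + a * W - b * W ^ 2) / χ =
      lap N (u t) x / χ - (∑ i, p i * q i) - W * ∑ i, h i i + a / χ * W - b / χ * W ^ 2 := by
    field_simp
    ring
  rw [hexp]
  nlinarith [hkey]
end
end
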